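/- Let γ : ℝ → ℝ be continuous, 1-periodic, with γ(t) ≥ 0 for all t, let ε > 0 satisfy ε·sup_t γ(t) ≤ 1, let q : [0,1] → ℝ be continuous, and let φ : ℝ² → ℝ be C¹ on an open neighborhood of [0,1]². Then |∫₀¹ q(x₁)·(φ(x₁, εγ(x₁/ε)) − φ(x₁, 0)) dx₁| ≤ √ε · (∫₀¹ q(x₁)² γ(x₁/ε) dx₁)^{1/2} · (∫_{{x ∈ (0,1)² : 0 < x₂ < εγ(x₁/ε)}} (∂₂φ(x))² dx)^{1/2}. -/

import Mathlib

/-!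
By the fundamental theorem of calculus, `φ (x₁, g x₁) - φ (x₁, 0)` is the integral of `∂₂φ` over
the vertical fibre `(0, g x₁)` of the thin region `regionBetween 0 g (0, 1)`, where
`g x₁ = ε γ (x₁ / ε)`. Cauchy–Schwarz on the fibre bounds it by `√(g x₁)` times the fibre energy;
Cauchy–Schwarz in `x₁` then pairs `|q| √g` with the square root of the fibre energy, and Fubini
reassembles the fibre energies into the energy of `∂₂φ` on the region.
-/

open MeasureTheory Set

/-- second partial derivative of a function on `ℝ²` -/
noncomputable def pd2 (u : ℝ × ℝ → ℝ) (x : ℝ × ℝ) : ℝ := fderiv ℝ u x (0, 1)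

theorem abs_integral_le_sqrt_integral_sq_mul_sqrt_integral_sq {α : Type*} [MeasurableSpace α]
    {μ : Measure α} {f g h : α → ℝ} (hf : MemLp f 2 μ) (hg : MemLp g 2 μ)
    (hfg : ∀ᵐ a ∂μ, |h a| ≤ |f a| * |g a|) :
    |∫ a, h a ∂μ| ≤ √(∫ a, f a ^ 2 ∂μ) * √(∫ a, g a ^ 2 ∂μ) := by
  have hL2 : ENNReal.ofReal 2 = 2 := by norm_num
  have holder := integral_mul_norm_le_Lp_mul_Lq Real.HolderConjugate.two_two
    (hL2 ▸ hf) (hL2 ▸ hg)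
  simp only [Real.norm_eq_abs, Real.rpow_two, sq_abs, ← Real.sqrt_eq_rpow] at holder
  calc |∫ a, h a ∂μ| ≤ ∫ a, |h a| ∂μ := abs_integral_le_integral_abs
    _ ≤ ∫ a, |f a| * |g a| ∂μ :=
      integral_mono_of_nonneg (.of_forall fun _ => abs_nonneg _)
        ((hf.integrable_mul hg).abs.congr (.of_forall fun a => abs_mul (f a) (g a))) hfg
    _ ≤ _ := holder

theorem ContinuousOn.memLp_two_restrict_Ioo {μ : Measure ℝ} [IsLocallyFiniteMeasure μ]
    {f : ℝ → ℝ} {a b : ℝ} (hf : ContinuousOn f (Icc a b)) :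
    MemLp f 2 (μ.restrict (Ioo a b)) :=
  (memLp_two_iff_integrable_sq
    ((hf.mono Ioo_subset_Icc_self).aestronglyMeasurable measurableSet_Ioo)).2
    ((hf.pow 2).integrableOn_Icc.mono_set Ioo_subset_Icc_self)

theorem abs_sub_le_sqrt_mul_sqrt_integral_deriv_sq {f f' : ℝ → ℝ} {a b : ℝ} (hab : a ≤ b)
    (hf : ∀ t ∈ Icc a b, HasDerivAt f (f' t) t) (hf' : ContinuousOn f' (Icc a b)) :
    |f b - f a| ≤ √(b - a) * √(∫ t in Ioo a b, f' t ^ 2) := by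
  have hFTC : f b - f a = ∫ t in Ioo a b, f' t := by
    rw [← integral_Ioc_eq_integral_Ioo, ← intervalIntegral.integral_of_le hab,
      intervalIntegral.integral_eq_sub_of_hasDerivAt (by rwa [uIcc_of_le hab])
        (hf'.intervalIntegrable_of_Icc hab)]
  have hCS := abs_integral_le_sqrt_integral_sq_mul_sqrt_integral_sq
    (μ := volume.restrict (Ioo a b)) (h := f') (memLp_const (1 : ℝ)) hf'.memLp_two_restrict_Ioo
    (.of_forall fun t => by simp)
  simpa [hFTC, Real.volume_real_Ioo_of_le hab] using hCS

theorem hasDerivAt_pd2 {φ : ℝ × ℝ → ℝ} {x₁ t : ℝ} (hφ : DifferentiableAt ℝ φ (x₁, t)) :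
    HasDerivAt (fun s => φ (x₁, s)) (pd2 φ (x₁, t)) t :=
  hφ.hasFDerivAt.comp_hasDerivAt t ((hasDerivAt_const t x₁).prodMk (hasDerivAt_id t))

theorem ContDiffOn.continuousOn_pd2 {φ : ℝ × ℝ → ℝ} {U : Set (ℝ × ℝ)} (hU : IsOpen U)
    (hφ : ContDiffOn ℝ 1 φ U) : ContinuousOn (pd2 φ) U :=
  (ContinuousLinearMap.apply ℝ ℝ ((0 : ℝ), (1 : ℝ))).continuous.comp_continuousOn
    (hφ.continuousOn_fderiv_of_isOpen hU le_rfl)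

theorem ContDiffOn.abs_sub_le_sqrt_mul_sqrt_integral_pd2_sq {φ : ℝ × ℝ → ℝ} {U : Set (ℝ × ℝ)}
    (hU : IsOpen U) (hφ : ContDiffOn ℝ 1 φ U) {x₁ a b : ℝ} (hab : a ≤ b)
    (hseg : ∀ t ∈ Icc a b, (x₁, t) ∈ U) :
    |φ (x₁, b) - φ (x₁, a)| ≤ √(b - a) * √(∫ t in Ioo a b, pd2 φ (x₁, t) ^ 2) :=
  abs_sub_le_sqrt_mul_sqrt_integral_deriv_sq hab
    (fun t ht => hasDerivAt_pd2 ((hφ.differentiableOn one_ne_zero).differentiableAt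
      (hU.mem_nhds (hseg t ht))))
    ((hφ.continuousOn_pd2 hU).comp (Continuous.continuousOn (by fun_prop)) hseg)

section regionBetween

variable {α : Type*} {f g : α → ℝ} {s : Set α} {F : α × ℝ → ℝ}

theorem integral_indicator_regionBetween_left (x : α) :
    ∫ y, (regionBetween f g s).indicator F (x, y) =
      s.indicator (fun x => ∫ y in Ioo (f x) (g x), F (x, y)) x := by
  by_cases hx : x ∈ s
  · simp only [indicator_of_mem hx, ← integral_indicator measurableSet_Ioo]
    congr 1 with y
    simp [regionBetween, indicator, hx]
  · simp [regionBetween, indicator, hx]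

variable [MeasurableSpace α] {μ : Measure α}

theorem MeasureTheory.IntegrableOn.integrableOn_integral_regionBetween
    (hF : IntegrableOn F (regionBetween f g s) (μ.prod volume)) (hf : Measurable f)
    (hg : Measurable g) (hs : MeasurableSet s) :
    IntegrableOn (fun x => ∫ y in Ioo (f x) (g x), F (x, y)) s μ := by
  rw [← integrable_indicator_iff hs]
  simpa only [integral_indicator_regionBetween_left] using
    ((integrable_indicator_iff (measurableSet_regionBetween hf hg hs)).2 hF).integral_prod_left

theorem setIntegral_regionBetween [SFinite μ]
    (hF : IntegrableOn F (regionBetween f g s) (μ.prod volume)) (hf : Measurable f)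
    (hg : Measurable g) (hs : MeasurableSet s) :
    ∫ p in regionBetween f g s, F p ∂μ.prod volume =
      ∫ x in s, (∫ y in Ioo (f x) (g x), F (x, y)) ∂μ := by
  rw [← integral_indicator (measurableSet_regionBetween hf hg hs),
    integral_prod _ ((integrable_indicator_iff (measurableSet_regionBetween hf hg hs)).2 hF)]
  simp only [integral_indicator_regionBetween_left, integral_indicator hs]

end regionBetween

theorem abs_setIntegral_mul_sub_le_sqrt_mul_sqrt_integral_pd2_sq {g : ℝ → ℝ} (hg : Continuous g)
    (hg01 : MapsTo g (Icc 0 1) (Icc 0 1)) {q : ℝ → ℝ} (hq : ContinuousOn q (Icc 0 1))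
    {φ : ℝ × ℝ → ℝ} {U : Set (ℝ × ℝ)} (hU : IsOpen U)
    (hUc : Icc (0 : ℝ) 1 ×ˢ Icc (0 : ℝ) 1 ⊆ U) (hφ : ContDiffOn ℝ 1 φ U) :
    |∫ x in Ioo 0 1, q x * (φ (x, g x) - φ (x, 0))| ≤
      √(∫ x in Ioo 0 1, q x ^ 2 * g x) *
        √(∫ p in regionBetween 0 g (Ioo 0 1), pd2 φ p ^ 2) := by
  set E : ℝ → ℝ := fun x => ∫ t in Ioo 0 (g x), pd2 φ (x, t) ^ 2
  have hsub : regionBetween 0 g (Ioo 0 1) ⊆ Icc (0 : ℝ) 1 ×ˢ Icc (0 : ℝ) 1 :=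
    fun p ⟨hx, ht⟩ => ⟨Ioo_subset_Icc_self hx, ht.1.le,
      ht.2.le.trans (hg01 (Ioo_subset_Icc_self hx)).2⟩
  have hint : IntegrableOn (fun p => pd2 φ p ^ 2) (regionBetween 0 g (Ioo 0 1))
      (volume.prod volume) :=
    ((((hφ.continuousOn_pd2 hU).mono hUc).pow 2).integrableOn_compact
      (isCompact_Icc.prod isCompact_Icc)).mono_set hsub
  have hE : IntegrableOn E (Ioo 0 1) :=
    hint.integrableOn_integral_regionBetween measurable_const hg.measurable measurableSet_Ioo
  have hfibre : ∀ x ∈ Ioo (0 : ℝ) 1,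
      |q x * (φ (x, g x) - φ (x, 0))| ≤ |q x * √(g x)| * |√(E x)| := by
    intro x hx
    have hgx := hg01 (Ioo_subset_Icc_self hx)
    rw [abs_mul, abs_mul, abs_of_nonneg (Real.sqrt_nonneg _),
      abs_of_nonneg (Real.sqrt_nonneg _), mul_assoc]
    gcongr
    simpa using hφ.abs_sub_le_sqrt_mul_sqrt_integral_pd2_sq hU hgx.1
      fun t ht => hUc ⟨Ioo_subset_Icc_self hx, ht.1, ht.2.trans hgx.2⟩
  have hsqE : ∀ x, √(E x) ^ 2 = E x := fun x =>
    Real.sq_sqrt (integral_nonneg fun _ => sq_nonneg _)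
  have hEL2 : MemLp (fun x => √(E x)) 2 (volume.restrict (Ioo 0 1)) :=
    (memLp_two_iff_integrable_sq
      (Real.continuous_sqrt.comp_aestronglyMeasurable hE.aestronglyMeasurable)).2
      (by simp only [hsqE]; exact hE)
  have hCS := abs_integral_le_sqrt_integral_sq_mul_sqrt_integral_sq
    (f := fun x => q x * √(g x))
    (hq.mul (Real.continuous_sqrt.comp hg).continuousOn).memLp_two_restrict_Ioo hEL2
    (ae_restrict_of_forall_mem measurableSet_Ioo hfibre)
  have hqg : ∫ x in Ioo 0 1, (q x * √(g x)) ^ 2 = ∫ x in Ioo 0 1, q x ^ 2 * g x :=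
    setIntegral_congr_fun measurableSet_Ioo fun x hx => by
      rw [mul_pow, Real.sq_sqrt (hg01 (Ioo_subset_Icc_self hx)).1]
  rw [Measure.volume_eq_prod,
    setIntegral_regionBetween hint measurable_const hg.measurable measurableSet_Ioo]
  simpa only [hqg, hsqE, Pi.zero_apply] using hCS

theorem boundary_difference_estimate_general
    (γ : ℝ → ℝ) (hγ : Continuous γ)
    (hpos : ∀ t, 0 ≤ γ t)
    (ε : ℝ) (hε : 0 < ε) (hεγ : ∀ t, ε * γ t ≤ 1)
    (q : ℝ → ℝ) (hq : ContinuousOn q (Set.Icc (0:ℝ) 1))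
    (φ : ℝ × ℝ → ℝ) (U : Set (ℝ × ℝ)) (hU : IsOpen U)
    (hUc : Set.Icc (0:ℝ) 1 ×ˢ Set.Icc (0:ℝ) 1 ⊆ U)
    (hφ : ContDiffOn ℝ 1 φ U) :
    |∫ x₁ in (0:ℝ)..1, q x₁ * (φ (x₁, ε * γ (x₁ / ε)) - φ (x₁, 0))| ≤
      Real.sqrt ε * Real.sqrt (∫ x₁ in (0:ℝ)..1, (q x₁) ^ 2 * γ (x₁ / ε)) *
        Real.sqrt (∫ x in {x : ℝ × ℝ | (0 < x.1 ∧ x.1 < 1) ∧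
            (0 < x.2 ∧ x.2 < ε * γ (x.1 / ε))}, (pd2 φ x) ^ 2) := by
  set g : ℝ → ℝ := fun x => ε * γ (x / ε)
  have hg : Continuous g := by fun_prop
  have hg01 : MapsTo g (Icc 0 1) (Icc 0 1) := fun x _ => ⟨mul_nonneg hε.le (hpos _), hεγ _⟩
  have hqg : ∫ x in Ioo 0 1, q x ^ 2 * g x = ε * ∫ x in (0:ℝ)..1, q x ^ 2 * γ (x / ε) := by
    rw [intervalIntegral.integral_of_le zero_le_one, integral_Ioc_eq_integral_Ioo,
      ← integral_const_mul]
    congr with x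
    ring
  have key := abs_setIntegral_mul_sub_le_sqrt_mul_sqrt_integral_pd2_sq hg hg01 hq hU hUc hφ
  rw [hqg, Real.sqrt_mul hε.le] at key
  rw [intervalIntegral.integral_of_le zero_le_one, integral_Ioc_eq_integral_Ioo]
  exact key

/-- The boundary-difference estimate in the proof of Lemma 3.3 of the paper:
the pairing of a boundary density `q` against the difference of the traces of
`φ` on the rough and flat boundaries is bounded by `√ε` times the gradient
energy in the thin region between the two boundaries. -/
theorem boundary_difference_estimate
    (γ : ℝ → ℝ) (hγ : Continuous γ) (hper : ∀ t, γ (t + 1) = γ t)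
    (hpos : ∀ t, 0 ≤ γ t)
    (ε : ℝ) (hε : 0 < ε) (hεγ : ∀ t, ε * γ t ≤ 1)
    (q : ℝ → ℝ) (hq : ContinuousOn q (Set.Icc (0:ℝ) 1))
    (φ : ℝ × ℝ → ℝ) (U : Set (ℝ × ℝ)) (hU : IsOpen U)
    (hUc : Set.Icc (0:ℝ) 1 ×ˢ Set.Icc (0:ℝ) 1 ⊆ U)
    (hφ : ContDiffOn ℝ 1 φ U) :
    |∫ x₁ in (0:ℝ)..1, q x₁ * (φ (x₁, ε * γ (x₁ / ε)) - φ (x₁, 0))| ≤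
      Real.sqrt ε * Real.sqrt (∫ x₁ in (0:ℝ)..1, (q x₁) ^ 2 * γ (x₁ / ε)) *
        Real.sqrt (∫ x in {x : ℝ × ℝ | (0 < x.1 ∧ x.1 < 1) ∧
            (0 < x.2 ∧ x.2 < ε * γ (x.1 / ε))}, (pd2 φ x) ^ 2) :=
  boundary_difference_estimate_general γ hγ hpos ε hε hεγ q hq φ U hU hUc hφ
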